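/- arXiv:2306.05288 — 4 statements merged into one kernel-verified Lean document; each statement's English description precedes it below -/
import Mathlib

section
/- Let U, P1, and P2 be reflexive real Banach spaces, and let b1 : U × P1 → ℝ and b2 : U × P2 → ℝ be bounded bilinear forms. Define Z := {v ∈ U : b2(v, p2) = 0 for all p2 ∈ P2}. Then the following are equivalent: (1) there exists c > 0 such that for all (p1, p2) ∈ P1 × P2, sup over nonzero v ∈ U of (b1(v, p1) + b2(v, p2)) / ‖v‖_U ≥ c (‖p1‖_{P1} + ‖p2‖_{P2}); (2) there exists c > 0 such that for all p1 ∈ P1, sup over nonzero v ∈ Z of b1(v, p1) / ‖v‖_U ≥ c ‖p1‖_{P1}, and for all p2 ∈ P2, sup over nonzero v ∈ U of b2(v, p2) / ‖v‖_U ≥ c ‖p2‖_{P2}. -/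
/-!
Each supremum is a dual norm: `⨆ v ≠ 0, g v / ‖v‖ = ‖g‖`, and over `Z = ker b2` it is the norm
of the restriction of `g` to `Z`. The combined condition at `p1 = 0` is the condition on `b2`, so
`p2 ↦ b2 · p2` is bounded below and has closed range in `U*`; since `U` is reflexive, Hahn–Banach
in `U*` shows that this range is the whole annihilator of `Z`. Given `p1`, extend `b1 · p1|_Z` to
`F` on `U` without increasing its norm: `b1 · p1 - F` annihilates `Z`, so it is `b2 · p2`, and the
combined condition at `(p1, -p2)` bounds `c ‖p1‖` by `‖F‖`. Conversely, for
`G = b1 · p1 + b2 · p2` the restriction of `G` to `Z` is that of `b1 · p1`, giving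
`c ‖p1‖ ≤ ‖G‖`, while `c ‖p2‖ ≤ ‖b2 · p2‖ ≤ ‖G‖ + ‖b1‖ ‖p1‖`; together these give the constant
`c² / (2c + ‖b1‖)`.
-/

open NormedSpace

theorem Submodule.exists_strongDual_eq_zero_ne_zero_of_notMem {E : Type*} [TopologicalSpace E]
    [AddCommGroup E] [Module ℝ E] [IsTopologicalAddGroup E] [ContinuousSMul ℝ E]
    [LocallyConvexSpace ℝ E] (M : Submodule ℝ E) (hM : IsClosed (M : Set E)) {x : E}
    (hx : x ∉ M) : ∃ Φ : StrongDual ℝ E, (∀ m ∈ M, Φ m = 0) ∧ Φ x ≠ 0 := by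
  obtain ⟨Φ, u, hlt, hgt⟩ := geometric_hahn_banach_closed_point M.convex hM hx
  have hu : 0 < u := by simpa using hlt 0 M.zero_mem
  refine ⟨Φ, fun m hm => ?_, (hu.trans hgt).ne'⟩
  -- a functional bounded above on a subspace vanishes there: otherwise rescale `m`
  by_contra hm0
  have := hlt ((u / Φ m) • m) (M.smul_mem _ hm)
  rw [map_smul, smul_eq_mul, div_mul_cancel₀ u hm0] at this
  exact lt_irrefl u this

section NormedSpace

variable {E : Type*} [NormedAddCommGroup E] [NormedSpace ℝ E]

theorem Submodule.mem_of_isClosed_of_forall_apply_eq_zero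
    (hE : Function.Surjective (inclusionInDoubleDual ℝ E))
    (M : Submodule ℝ (StrongDual ℝ E)) (hM : IsClosed (M : Set (StrongDual ℝ E)))
    {f : StrongDual ℝ E} (hf : ∀ v, (∀ φ ∈ M, φ v = 0) → f v = 0) : f ∈ M := by
  by_contra hfM
  obtain ⟨Φ, hΦM, hΦf⟩ := M.exists_strongDual_eq_zero_ne_zero_of_notMem hM hfM
  obtain ⟨v, rfl⟩ := hE Φ
  simp only [dual_def] at hΦM hΦf
  exact hΦf (hf v hΦM)

theorem ContinuousLinearMap.iSup_div_norm_eq_opNorm (g : StrongDual ℝ E) :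
    ⨆ v : {v : E // v ≠ 0}, g v / ‖v.1‖ = ‖g‖ := by
  set S := ⨆ v : {v : E // v ≠ 0}, g v / ‖v.1‖
  have hle (v : {v : E // v ≠ 0}) : g v / ‖v.1‖ ≤ ‖g‖ :=
    div_le_of_le_mul₀ (norm_nonneg _) (norm_nonneg _) ((le_abs_self _).trans (g.le_opNorm v))
  have hbdd : BddAbove (Set.range fun v : {v : E // v ≠ 0} => g v / ‖v.1‖) :=
    ⟨‖g‖, Set.forall_mem_range.2 hle⟩
  have habs (v : E) (hv : v ≠ 0) : |g v| ≤ S * ‖v‖ := by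
    have hv' : 0 < ‖v‖ := norm_pos_iff.2 hv
    have hpos := le_ciSup hbdd ⟨v, hv⟩
    have hneg := le_ciSup hbdd ⟨-v, neg_ne_zero.2 hv⟩
    simp only [map_neg, norm_neg] at hpos hneg
    exact abs_le.2 ⟨neg_le.1 ((div_le_iff₀ hv').1 hneg), (div_le_iff₀ hv').1 hpos⟩
  have hS : 0 ≤ S := by
    rcases isEmpty_or_nonempty {v : E // v ≠ 0} with h | ⟨v, hv⟩
    · exact (Real.iSup_of_isEmpty _).ge
    · exact nonneg_of_mul_nonneg_left ((abs_nonneg _).trans (habs v hv)) (norm_pos_iff.2 hv)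
  exact le_antisymm (Real.iSup_le hle (norm_nonneg g))
    (g.opNorm_le_bound' hS fun v hv => habs v (norm_ne_zero_iff.1 hv))

theorem ContinuousLinearMap.iSup_mem_div_norm_eq_opNorm_comp_subtypeL (K : Submodule ℝ E)
    (g : StrongDual ℝ E) :
    ⨆ v : {v : E // v ∈ K ∧ v ≠ 0}, g v / ‖v.1‖ = ‖g.comp K.subtypeL‖ := by
  rw [← iSup_div_norm_eq_opNorm]
  refine (Equiv.iSup_congr ((Equiv.subtypeEquivRight fun v => ?_).trans
    (Equiv.subtypeSubtypeEquivSubtypeInter (· ∈ K) (· ≠ 0))) fun v => rfl).symm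
  simp

end NormedSpace

namespace ContinuousLinearMap

variable {U P P1 P2 : Type*} [NormedAddCommGroup U] [NormedSpace ℝ U]
  [NormedAddCommGroup P] [NormedSpace ℝ P] [NormedAddCommGroup P1] [NormedSpace ℝ P1]
  [NormedAddCommGroup P2] [NormedSpace ℝ P2]

theorem exists_flip_eq_of_forall_eq_zero [CompleteSpace P]
    (hU : Function.Surjective (inclusionInDoubleDual ℝ U)) (b : U →L[ℝ] P →L[ℝ] ℝ)
    {c : ℝ} (hc : 0 < c) (hb : ∀ p, c * ‖p‖ ≤ ‖b.flip p‖) {f : StrongDual ℝ U}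
    (hf : ∀ v, (∀ p, b v p = 0) → f v = 0) : ∃ p, b.flip p = f := by
  have hclosed : IsClosed (Set.range b.flip) := by
    refine (b.flip.antilipschitz_of_bound (K := c⁻¹.toNNReal) fun p => ?_).isClosed_range
      b.flip.uniformContinuous
    rw [Real.coe_toNNReal _ (inv_nonneg.2 hc.le), le_inv_mul_iff₀ hc]
    exact hb p
  refine b.flip.range.mem_of_isClosed_of_forall_apply_eq_zero hU
    (by rwa [LinearMap.coe_range]) fun v hv => hf v fun p => hv (b.flip p) ⟨p, rfl⟩

theorem mul_norm_le_norm_flip_comp_subtypeL_ker [CompleteSpace P2]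
    (hU : Function.Surjective (inclusionInDoubleDual ℝ U))
    (b1 : U →L[ℝ] P1 →L[ℝ] ℝ) (b2 : U →L[ℝ] P2 →L[ℝ] ℝ) {c : ℝ} (hc : 0 < c)
    (h : ∀ p1 p2, c * (‖p1‖ + ‖p2‖) ≤ ‖b1.flip p1 + b2.flip p2‖) (p1 : P1) :
    c * ‖p1‖ ≤ ‖(b1.flip p1).comp b2.ker.subtypeL‖ := by
  have h2 (p2 : P2) : c * ‖p2‖ ≤ ‖b2.flip p2‖ := by simpa using h 0 p2
  obtain ⟨F, hF, hFnorm⟩ := exists_extension_norm_eq _ ((b1.flip p1).comp b2.ker.subtypeL)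
  obtain ⟨p2, hp2⟩ := b2.exists_flip_eq_of_forall_eq_zero hU hc h2 (f := b1.flip p1 - F)
    fun v hv => by simp [hF ⟨v, ext hv⟩]
  calc c * ‖p1‖ ≤ c * (‖p1‖ + ‖-p2‖) := by gcongr; exact le_add_of_nonneg_right (norm_nonneg _)
    _ ≤ ‖b1.flip p1 + b2.flip (-p2)‖ := h p1 (-p2)
    _ = ‖(b1.flip p1).comp b2.ker.subtypeL‖ := by
      rw [map_neg, hp2, ← sub_eq_add_neg, sub_sub_cancel, hFnorm]

theorem div_mul_norm_add_le_norm_flip_add_flip (b1 : U →L[ℝ] P1 →L[ℝ] ℝ)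
    (b2 : U →L[ℝ] P2 →L[ℝ] ℝ) {c : ℝ} (hc : 0 < c)
    (h1 : ∀ p1, c * ‖p1‖ ≤ ‖(b1.flip p1).comp b2.ker.subtypeL‖)
    (h2 : ∀ p2, c * ‖p2‖ ≤ ‖b2.flip p2‖) (p1 : P1) (p2 : P2) :
    c ^ 2 / (2 * c + ‖b1‖) * (‖p1‖ + ‖p2‖) ≤ ‖b1.flip p1 + b2.flip p2‖ := by
  set F := b1.flip p1 + b2.flip p2
  have hF1 : c * ‖p1‖ ≤ ‖F‖ := calc
    c * ‖p1‖ ≤ ‖(b1.flip p1).comp b2.ker.subtypeL‖ := h1 p1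
    _ = ‖F.comp b2.ker.subtypeL‖ := by
      congr 1
      ext ⟨v, hv⟩
      have hv' : b2 v = 0 := hv
      simp [F, hv']
    _ ≤ ‖F‖ * ‖b2.ker.subtypeL‖ := opNorm_comp_le _ _
    _ ≤ ‖F‖ := mul_le_of_le_one_right (norm_nonneg F) (Submodule.norm_subtypeL_le _)
  have hF2 : c * ‖p2‖ ≤ ‖F‖ + ‖b1‖ * ‖p1‖ := calc
    c * ‖p2‖ ≤ ‖b2.flip p2‖ := h2 p2
    _ = ‖F - b1.flip p1‖ := by rw [add_sub_cancel_left]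
    _ ≤ ‖F‖ + ‖b1.flip p1‖ := norm_sub_le _ _
    _ ≤ ‖F‖ + ‖b1‖ * ‖p1‖ := by grw [b1.flip.le_opNorm p1, opNorm_flip]
  rw [div_mul_eq_mul_div, div_le_iff₀ (by positivity)]
  nlinarith [mul_le_mul_of_nonneg_left hF1 hc.le, mul_le_mul_of_nonneg_left hF2 hc.le,
    mul_le_mul_of_nonneg_left hF1 (norm_nonneg b1)]

end ContinuousLinearMap

theorem split_inf_sup_equivalence_general
    {U P1 P2 : Type*}
    [NormedAddCommGroup U] [NormedSpace ℝ U]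
    [NormedAddCommGroup P1] [NormedSpace ℝ P1]
    [NormedAddCommGroup P2] [NormedSpace ℝ P2] [CompleteSpace P2]
    (hUrefl : Function.Surjective ⇑(NormedSpace.inclusionInDoubleDual ℝ U))
    (b1 : U →L[ℝ] P1 →L[ℝ] ℝ) (b2 : U →L[ℝ] P2 →L[ℝ] ℝ) :
    (∃ c > (0 : ℝ), ∀ (p1 : P1) (p2 : P2),
        c * (‖p1‖ + ‖p2‖) ≤ ⨆ v : {v : U // v ≠ 0}, (b1 v.1 p1 + b2 v.1 p2) / ‖v.1‖)
    ↔
    (∃ c > (0 : ℝ),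
      (∀ p1 : P1,
        c * ‖p1‖ ≤ ⨆ v : {v : U // (∀ p2 : P2, b2 v p2 = 0) ∧ v ≠ 0}, b1 v.1 p1 / ‖v.1‖) ∧
      (∀ p2 : P2,
        c * ‖p2‖ ≤ ⨆ v : {v : U // v ≠ 0}, b2 v.1 p2 / ‖v.1‖)) := by
  have hsum (p1 : P1) (p2 : P2) : ⨆ v : {v : U // v ≠ 0}, (b1 v.1 p1 + b2 v.1 p2) / ‖v.1‖ =
      ‖b1.flip p1 + b2.flip p2‖ := (b1.flip p1 + b2.flip p2).iSup_div_norm_eq_opNorm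
  have hb2 (p2 : P2) : ⨆ v : {v : U // v ≠ 0}, b2 v.1 p2 / ‖v.1‖ = ‖b2.flip p2‖ :=
    (b2.flip p2).iSup_div_norm_eq_opNorm
  have hb1 (p1 : P1) : ⨆ v : {v : U // (∀ p2 : P2, b2 v p2 = 0) ∧ v ≠ 0}, b1 v.1 p1 / ‖v.1‖ =
      ‖(b1.flip p1).comp b2.ker.subtypeL‖ := by
    rw [show (fun v : U => (∀ p2 : P2, b2 v p2 = 0) ∧ v ≠ 0) = fun v => v ∈ b2.ker ∧ v ≠ 0 by
      ext v; simp [ContinuousLinearMap.ext_iff]]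
    exact (b1.flip p1).iSup_mem_div_norm_eq_opNorm_comp_subtypeL b2.ker
  simp only [hsum, hb1, hb2]
  constructor
  · rintro ⟨c, hc, h⟩
    exact ⟨c, hc, b1.mul_norm_le_norm_flip_comp_subtypeL_ker hUrefl b2 hc h,
      fun p2 => by simpa using h 0 p2⟩
  · rintro ⟨c, hc, h1, h2⟩
    exact ⟨_, by positivity, b1.div_mul_norm_add_le_norm_flip_add_flip b2 hc h1 h2⟩

/-- Split inf-sup stability equivalence (Howell–Walkington, Theorem 3.1):
for reflexive real Banach spaces `U`, `P1`, `P2` and bounded bilinear forms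
`b1 : U × P1 → ℝ`, `b2 : U × P2 → ℝ`, with
`Z := {v ∈ U | b2 v p2 = 0 for all p2}`, the combined inf-sup condition is
equivalent to the pair of separate inf-sup conditions. -/
theorem split_inf_sup_equivalence
    {U P1 P2 : Type*}
    [NormedAddCommGroup U] [NormedSpace ℝ U] [CompleteSpace U]
    [NormedAddCommGroup P1] [NormedSpace ℝ P1] [CompleteSpace P1]
    [NormedAddCommGroup P2] [NormedSpace ℝ P2] [CompleteSpace P2]
    (hUrefl : Function.Surjective ⇑(NormedSpace.inclusionInDoubleDual ℝ U))
    (hP1refl : Function.Surjective ⇑(NormedSpace.inclusionInDoubleDual ℝ P1))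
    (hP2refl : Function.Surjective ⇑(NormedSpace.inclusionInDoubleDual ℝ P2))
    (b1 : U →L[ℝ] P1 →L[ℝ] ℝ) (b2 : U →L[ℝ] P2 →L[ℝ] ℝ) :
    (∃ c > (0 : ℝ), ∀ (p1 : P1) (p2 : P2),
        c * (‖p1‖ + ‖p2‖) ≤ ⨆ v : {v : U // v ≠ 0}, (b1 v.1 p1 + b2 v.1 p2) / ‖v.1‖)
    ↔
    (∃ c > (0 : ℝ),
      (∀ p1 : P1,
        c * ‖p1‖ ≤ ⨆ v : {v : U // (∀ p2 : P2, b2 v p2 = 0) ∧ v ≠ 0}, b1 v.1 p1 / ‖v.1‖) ∧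
      (∀ p2 : P2,
        c * ‖p2‖ ≤ ⨆ v : {v : U // v ≠ 0}, b2 v.1 p2 / ‖v.1‖)) :=
  split_inf_sup_equivalence_general hUrefl b1 b2
end

section
/- Let Ω̂ and Ω be open subsets of ℝ^d and let T : Ω̂ → Ω be a C² diffeomorphism with Jacobian matrix J(x̂) := DT(x̂) (which is invertible at every x̂ ∈ Ω̂). Let v̂ : Ω̂ → ℝ^d be continuously differentiable and define the Piola push-forward v : Ω → ℝ^d by v(T(x̂)) := det(J(x̂))⁻¹ J(x̂) v̂(x̂) for all x̂ ∈ Ω̂. Then v is differentiable and for every x̂ ∈ Ω̂, (div v)(T(x̂)) = det(J(x̂))⁻¹ (div v̂)(x̂). -/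
/-!
Near `x̂`, `T` has a local inverse `S`, so `v = F ∘ S` with `F = (det J)⁻¹ • J v̂` and
`Dv (T x̂) = DF (x̂) ∘ J⁻¹`. By Jacobi's formula `D (det J) h = det J · tr (J⁻¹ ∘ D²T h)`, so the
trace of `DF ∘ J⁻¹` is `(det J)⁻¹ tr (Dv̂)` plus the two terms `± (det J)⁻¹ tr (J⁻¹ ∘ D²T v̂)`,
one coming from differentiating `J` and one from differentiating `(det J)⁻¹`; they cancel
because `D²T` is symmetric.
-/

/-- The divergence of a vector field `w : ℝ^d → ℝ^d` at `x`:
`div w (x) = ∑ i ∂wᵢ/∂xᵢ (x)`, the trace of the Fréchet derivative. -/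
noncomputable def pdiv {d : ℕ} (w : (Fin d → ℝ) → (Fin d → ℝ)) (x : Fin d → ℝ) : ℝ :=
  ∑ i, fderiv ℝ w x (Pi.single i 1) i

open Topology Polynomial

section Determinant

variable {𝕜 E : Type*} [NontriviallyNormedField 𝕜] [CompleteSpace 𝕜]
  [NormedAddCommGroup E] [NormedSpace 𝕜 E] [FiniteDimensional 𝕜 E]

theorem ContinuousLinearMap.differentiable_det :
    Differentiable 𝕜 fun A : E →L[𝕜] E => A.det := by
  classical
  let b := Module.finBasis 𝕜 E
  have hentry : ∀ i j, Differentiable 𝕜 fun A : E →L[𝕜] E => b.repr (A (b j)) i := fun i j =>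
    ((LinearMap.toContinuousLinearMap (b.coord i)).comp
      (ContinuousLinearMap.apply 𝕜 E (b j))).differentiable
  have hdet : (fun A : E →L[𝕜] E => A.det) =
      fun A => ∑ σ : Equiv.Perm (Fin _), (σ.sign : 𝕜) * ∏ i, b.repr (A (b i)) (σ i) := by
    ext A
    rw [ContinuousLinearMap.det, ← LinearMap.det_toMatrix b, Matrix.det_apply]
    simp [LinearMap.toMatrix_apply, Units.smul_def]
  rw [hdet]
  fun_prop

theorem ContinuousLinearMap.fderiv_det_apply (A : E ≃L[𝕜] E) (H : E →L[𝕜] E) :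
    fderiv 𝕜 (fun B : E →L[𝕜] E => B.det) A H =
      (A : E →L[𝕜] E).det * LinearMap.trace 𝕜 E ((A.symm : E →L[𝕜] E) ∘L H) := by
  classical
  -- `det (A + t • H) = det A * det (1 + t • A⁻¹ H)`, a polynomial in `t` whose derivative at `0`
  -- is `det A * tr (A⁻¹ H)`.
  set M : E →L[𝕜] E := (A.symm : E →L[𝕜] E) ∘L H
  let b := Module.finBasis 𝕜 E
  let P : 𝕜[X] := (1 + (X : 𝕜[X]) • (LinearMap.toMatrix b b M).map C).det
  have hline : ∀ t : 𝕜, ((A : E →L[𝕜] E) + t • H).det = (A : E →L[𝕜] E).det * P.eval t := by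
    intro t
    have : (A : E →L[𝕜] E) + t • H = (A : E →L[𝕜] E) ∘L (1 + t • M) := by ext; simp [M]
    rw [this, ContinuousLinearMap.det, ContinuousLinearMap.toLinearMap_comp, LinearMap.det_comp]
    congr 1
    rw [← LinearMap.det_toMatrix b]
    simp [P, eval_det, ← Matrix.smul_eq_mul_diagonal]
  have h1 : HasDerivAt (fun t : 𝕜 => ((A : E →L[𝕜] E) + t • H).det)
      (fderiv 𝕜 (fun B : E →L[𝕜] E => B.det) A H) 0 := by
    have hpath : HasDerivAt (fun t : 𝕜 => (A : E →L[𝕜] E) + t • H) H 0 := by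
      simpa using ((hasDerivAt_id (0 : 𝕜)).smul_const H).const_add (A : E →L[𝕜] E)
    exact (differentiable_det (A : E →L[𝕜] E)).hasFDerivAt.comp_hasDerivAt_of_eq 0 hpath
      (by simp)
  have h2 : HasDerivAt (fun t : 𝕜 => ((A : E →L[𝕜] E) + t • H).det)
      ((A : E →L[𝕜] E).det * P.derivative.eval 0) 0 := by
    simp_rw [hline]; exact (P.hasDerivAt 0).const_mul _
  rw [h1.unique h2, Matrix.derivative_det_one_add_X_smul, LinearMap.trace_eq_matrix_trace 𝕜 b]

end Determinant

/-- With `B = Dv̂`, `W = D²T`, `u = v̂` and `ℓ = D (det DT) / det DT`, the map inside the trace is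
`det J` times the derivative of the Piola push-forward `v`. -/
theorem ContinuousLinearMap.trace_add_flip_sub_smulRight_comp_symm {𝕜 E : Type*}
    [NontriviallyNormedField 𝕜] [NormedAddCommGroup E] [NormedSpace 𝕜 E]
    [FiniteDimensional 𝕜 E] (J : E ≃L[𝕜] E) (B : E →L[𝕜] E)
    (W : E →L[𝕜] E →L[𝕜] E) (hW : ∀ a b, W a b = W b a) (u : E) (ℓ : E →L[𝕜] 𝕜)
    (hℓ : ∀ h, ℓ h = LinearMap.trace 𝕜 E ((J.symm : E →L[𝕜] E) ∘L W h)) :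
    LinearMap.trace 𝕜 E (((J : E →L[𝕜] E) ∘L B + W.flip u - ℓ.smulRight (J u)) ∘L
      (J.symm : E →L[𝕜] E)) = LinearMap.trace 𝕜 E B := by
  have hconj : LinearMap.trace 𝕜 E (((J : E →L[𝕜] E) ∘L B) ∘L (J.symm : E →L[𝕜] E)) =
      LinearMap.trace 𝕜 E B := by
    rw [ContinuousLinearMap.toLinearMap_comp, LinearMap.trace_comp_comm']
    congr 1
    ext
    simp
  have hflip : LinearMap.trace 𝕜 E (W.flip u ∘L (J.symm : E →L[𝕜] E)) = ℓ u := by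
    have hWu : W.flip u = W u := by
      ext a
      simp [hW]
    rw [hWu, hℓ, ContinuousLinearMap.toLinearMap_comp, LinearMap.trace_comp_comm',
      ← ContinuousLinearMap.toLinearMap_comp]
  have hrank : LinearMap.trace 𝕜 E (ℓ.smulRight (J u) ∘L (J.symm : E →L[𝕜] E)) = ℓ u := by
    have hcomp : ℓ.smulRight (J u) ∘L (J.symm : E →L[𝕜] E) =
        (ℓ ∘L (J.symm : E →L[𝕜] E)).smulRight (J u) := by
      ext
      simp
    rw [hcomp]
    exact (LinearMap.trace_smulRight _ _).trans (by simp)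
  simp only [ContinuousLinearMap.add_comp, ContinuousLinearMap.sub_comp,
    ContinuousLinearMap.toLinearMap_add, ContinuousLinearMap.toLinearMap_sub, map_add, map_sub,
    hconj, hflip, hrank, add_sub_cancel_right]

theorem HasStrictFDerivAt.hasFDerivAt_of_eventually_comp_eq
    {𝕜 E F G : Type*} [NontriviallyNormedField 𝕜]
    [NormedAddCommGroup E] [NormedSpace 𝕜 E] [CompleteSpace E]
    [NormedAddCommGroup F] [NormedSpace 𝕜 F] [CompleteSpace F]
    [NormedAddCommGroup G] [NormedSpace 𝕜 G]
    {T : E → F} {J : E ≃L[𝕜] F} {x : E} (hT : HasStrictFDerivAt T (J : E →L[𝕜] F) x)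
    {v : F → G} {g : E → G} {g' : E →L[𝕜] G} (hg : HasFDerivAt g g' x)
    (hvg : ∀ᶠ y in 𝓝 x, v (T y) = g y) :
    HasFDerivAt v (g' ∘L (J.symm : F →L[𝕜] E)) (T x) := by
  set S := hT.localInverse T J x
  have hS : HasStrictFDerivAt S (J.symm : F →L[𝕜] E) (T x) := hT.to_localInverse
  have hSx : S (T x) = x := hT.localInverse_apply_image
  have hvgS : v =ᶠ[𝓝 (T x)] g ∘ S := by
    have hS_tendsto : Filter.Tendsto S (𝓝 (T x)) (𝓝 x) := by
      simpa only [hSx] using hS.continuousAt.tendsto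
    filter_upwards [hT.eventually_right_inverse, hS_tendsto.eventually hvg] with y hTS hvgy
    rwa [hTS] at hvgy
  exact ((hSx ▸ hg).comp (T x) hS.hasFDerivAt).congr_of_eventuallyEq hvgS

theorem pdiv_eq_trace_fderiv {d : ℕ} (w : (Fin d → ℝ) → (Fin d → ℝ)) (x : Fin d → ℝ) :
    pdiv w x = LinearMap.trace ℝ (Fin d → ℝ) (fderiv ℝ w x) := by
  rw [LinearMap.trace_eq_matrix_trace ℝ (Pi.basisFun ℝ (Fin d)), Matrix.trace, pdiv]
  simp

theorem differentiableAt_and_trace_fderiv_of_piola {E : Type*} [NormedAddCommGroup E]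
    [NormedSpace ℝ E] [FiniteDimensional ℝ E] {T vhat v : E → E} {x : E} (hT : ContDiffAt ℝ 2 T x)
    (hJ : (fderiv ℝ T x).det ≠ 0) (hvhat : DifferentiableAt ℝ vhat x)
    (hv : ∀ᶠ y in 𝓝 x, v (T y) = ((fderiv ℝ T y).det)⁻¹ • fderiv ℝ T y (vhat y)) :
    DifferentiableAt ℝ v (T x) ∧ LinearMap.trace ℝ E (fderiv ℝ v (T x)) =
      ((fderiv ℝ T x).det)⁻¹ * LinearMap.trace ℝ E (fderiv ℝ vhat x) := by
  set c := (fderiv ℝ T x).det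
  set J := (fderiv ℝ T x).toContinuousLinearEquivOfDetNeZero hJ
  have hJx : (J : E →L[ℝ] E) = fderiv ℝ T x := by simp [J]
  have hDT : DifferentiableAt ℝ (fderiv ℝ T) x :=
    (hT.fderiv_right (m := 1) le_rfl).differentiableAt one_ne_zero
  set W := fderiv ℝ (fderiv ℝ T) x
  have hW : ∀ a b, W a b = W b a := (hT.isSymmSndFDerivAt (by simp)).eq
  have hdet : DifferentiableAt ℝ (fun y => (fderiv ℝ T y).det) x :=
    (ContinuousLinearMap.differentiable_det _).comp (g := fun A : E →L[ℝ] E => A.det) x hDT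
  set φ' := fderiv ℝ (fun y => (fderiv ℝ T y).det) x
  have hφ' : ∀ h, φ' h = c * LinearMap.trace ℝ E ((J.symm : E →L[ℝ] E) ∘L W h) := by
    intro h
    rw [show φ' = _ from fderiv_comp (g := fun A : E →L[ℝ] E => A.det) x
      (ContinuousLinearMap.differentiable_det _) hDT,
      ContinuousLinearMap.comp_apply, ← hJx, ContinuousLinearMap.fderiv_det_apply, hJx]
  set u := vhat x
  have hF : HasFDerivAt (fun y => ((fderiv ℝ T y).det)⁻¹ • fderiv ℝ T y (vhat y))
      (c⁻¹ • ((J : E →L[ℝ] E) ∘L fderiv ℝ vhat x + W.flip u - (c⁻¹ • φ').smulRight (J u))) x := by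
    refine (((hasFDerivAt_inv' hJ).comp x hdet.hasFDerivAt).smul
      (hDT.hasFDerivAt.clm_apply hvhat.hasFDerivAt)).congr_fderiv ?_
    have hJapply : ∀ w, J w = fderiv ℝ T x w := fun w => by rw [← hJx]; rfl
    ext h
    simp [hJapply]
    module
  have hvDeriv :=
    (hJx ▸ hT.hasStrictFDerivAt (by norm_num)).hasFDerivAt_of_eventually_comp_eq hF hv
  refine ⟨hvDeriv.differentiableAt, ?_⟩
  rw [hvDeriv.fderiv, ContinuousLinearMap.smul_comp, ContinuousLinearMap.toLinearMap_smul,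
    map_smul, ContinuousLinearMap.trace_add_flip_sub_smulRight_comp_symm J _ W hW u _
      (by simp [hφ', c, hJ]), smul_eq_mul]

theorem piola_preserves_divergence_pointwise_general {d : ℕ}
    (Ωhat Ω : Set (Fin d → ℝ)) (hΩhat : IsOpen Ωhat)
    (T : (Fin d → ℝ) → (Fin d → ℝ))
    (hT : ContDiffOn ℝ 2 T Ωhat)
    (hTbij : Set.BijOn T Ωhat Ω)
    (hJ : ∀ xh ∈ Ωhat, (fderiv ℝ T xh).det ≠ 0)
    (vhat : (Fin d → ℝ) → (Fin d → ℝ))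
    (hvhat : ContDiffOn ℝ 1 vhat Ωhat)
    (v : (Fin d → ℝ) → (Fin d → ℝ))
    (hv : ∀ xh ∈ Ωhat,
      v (T xh) = ((fderiv ℝ T xh).det)⁻¹ • fderiv ℝ T xh (vhat xh)) :
    (∀ x ∈ Ω, DifferentiableAt ℝ v x) ∧
    (∀ xh ∈ Ωhat, pdiv v (T xh) = ((fderiv ℝ T xh).det)⁻¹ * pdiv vhat xh) := by
  have hlocal : ∀ xh ∈ Ωhat, DifferentiableAt ℝ v (T xh) ∧
      pdiv v (T xh) = ((fderiv ℝ T xh).det)⁻¹ * pdiv vhat xh := by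
    intro xh hxh
    have hnhds : Ωhat ∈ 𝓝 xh := hΩhat.mem_nhds hxh
    rw [pdiv_eq_trace_fderiv, pdiv_eq_trace_fderiv]
    exact differentiableAt_and_trace_fderiv_of_piola (hT.contDiffAt hnhds) (hJ xh hxh)
      ((hvhat.contDiffAt hnhds).differentiableAt one_ne_zero)
      (Filter.eventually_of_mem hnhds hv)
  refine ⟨fun x hx => ?_, fun xh hxh => (hlocal xh hxh).2⟩
  obtain ⟨xh, hxh, rfl⟩ := hTbij.surjOn hx
  exact (hlocal xh hxh).1

/-- The contravariant Piola transform preserves divergence, pointwise form: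
if `T : Ω̂ → Ω` is a `C²` diffeomorphism with everywhere invertible Jacobian
`J = DT`, `v̂` is `C¹` on `Ω̂`, and `v (T xh) = det(J xh)⁻¹ • (J xh) (v̂ xh)`, then `v`
is differentiable on `Ω` and `(div v)(T xh) = det(J xh)⁻¹ * (div v̂)(xh)` on `Ω̂`. -/
theorem piola_preserves_divergence_pointwise {d : ℕ}
    (Ωhat Ω : Set (Fin d → ℝ)) (hΩhat : IsOpen Ωhat) (hΩ : IsOpen Ω)
    (T : (Fin d → ℝ) → (Fin d → ℝ))
    (hT : ContDiffOn ℝ 2 T Ωhat)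
    (hTbij : Set.BijOn T Ωhat Ω)
    (hJ : ∀ xh ∈ Ωhat, (fderiv ℝ T xh).det ≠ 0)
    (vhat : (Fin d → ℝ) → (Fin d → ℝ))
    (hvhat : ContDiffOn ℝ 1 vhat Ωhat)
    (v : (Fin d → ℝ) → (Fin d → ℝ))
    (hv : ∀ xh ∈ Ωhat,
      v (T xh) = ((fderiv ℝ T xh).det)⁻¹ • fderiv ℝ T xh (vhat xh)) :
    (∀ x ∈ Ω, DifferentiableAt ℝ v x) ∧
    (∀ xh ∈ Ωhat, pdiv v (T xh) = ((fderiv ℝ T xh).det)⁻¹ * pdiv vhat xh) :=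
  piola_preserves_divergence_pointwise_general Ωhat Ω hΩhat T hT hTbij hJ vhat hvhat v hv
end

section
/- Let d ≥ 1 and k ≥ 0 be integers. Define the Raviart–Thomas set RT_k to be the set of d-tuples (v_1, …, v_d) of real polynomials in variables x_1, …, x_d such that for each i, the degree of v_i in the variable x_i is at most k + 1 and the degree of v_i in every other variable x_j (j ≠ i) is at most k. Define Q_k to be the set of real polynomials in x_1, …, x_d whose degree in each variable is at most k. Then { ∑_{i=1}^d ∂v_i/∂x_i : (v_1, …, v_d) ∈ RT_k } = Q_k; that is, the divergence of every element of RT_k lies in Q_k, and every element of Q_k is the divergence of some element of RT_k. -/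
/-!
Differentiating in `x_i` lowers the degree in `x_i` by one and does not raise the degree in
any other variable, which gives `∇·RT_k ⊆ Q_k`. Conversely, a polynomial `q ∈ Q_k` is the
divergence of the field whose only nonzero component is a termwise antiderivative of `q` in
`x_1`, and that antiderivative lies in the first component of `RT_k`.
-/

open MvPolynomial

namespace MvPolynomial

section pderiv

variable {σ R : Type*} [CommSemiring R] {p : MvPolynomial σ R}

theorem add_single_mem_support_of_mem_support_pderiv {i : σ} {m : σ →₀ ℕ}
    (hm : m ∈ (pderiv i p).support) : m + Finsupp.single i 1 ∈ p.support := by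
  rw [mem_support_iff, coeff_pderiv] at hm
  exact mem_support_iff.mpr (left_ne_zero_of_mul hm)

theorem degreeOf_pderiv_le_of_ne {i j : σ} (hji : j ≠ i) (p : MvPolynomial σ R) :
    degreeOf j (pderiv i p) ≤ degreeOf j p :=
  degreeOf_le_iff.mpr fun m hm => by
    simpa [Finsupp.single_eq_of_ne hji] using
      le_degreeOf_of_mem_support j (add_single_mem_support_of_mem_support_pderiv hm)

theorem degreeOf_pderiv_self_le (i : σ) (p : MvPolynomial σ R) :
    degreeOf i (pderiv i p) ≤ degreeOf i p - 1 :=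
  degreeOf_le_iff.mpr fun m hm => by
    have := le_degreeOf_of_mem_support i (add_single_mem_support_of_mem_support_pderiv hm)
    simp only [Finsupp.add_apply, Finsupp.single_eq_same] at this
    omega

end pderiv

section antideriv

variable {σ R : Type*} [Semifield R]

noncomputable def antideriv (i : σ) (q : MvPolynomial σ R) : MvPolynomial σ R :=
  ∑ m ∈ q.support, monomial (m + Finsupp.single i 1) (q.coeff m / (m i + 1))

theorem pderiv_antideriv [CharZero R] (i : σ) (q : MvPolynomial σ R) :
    pderiv i (antideriv i q) = q := by
  rw [antideriv, map_sum]
  conv_rhs => rw [q.as_sum]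
  refine Finset.sum_congr rfl fun m _ => ?_
  have hsucc : m i + 1 ≠ (0 : R) := by exact_mod_cast Nat.succ_ne_zero (m i)
  rw [pderiv_monomial, add_tsub_cancel_right]
  simp [div_mul_cancel₀ _ hsucc]

theorem support_antideriv_subset (i : σ) (q : MvPolynomial σ R) :
    (antideriv i q).support ⊆ q.support.map (addRightEmbedding (Finsupp.single i 1)) := by
  classical
  exact support_sum.trans <| Finset.biUnion_subset.mpr fun m hm =>
    support_monomial_subset.trans <| Finset.singleton_subset_iff.mpr <| Finset.mem_map_of_mem _ hm

theorem degreeOf_antideriv_le_of_ne {i j : σ} (hji : j ≠ i) (q : MvPolynomial σ R) :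
    degreeOf j (antideriv i q) ≤ degreeOf j q :=
  degreeOf_le_iff.mpr fun m hm => by
    obtain ⟨n, hn, rfl⟩ := Finset.mem_map.mp (support_antideriv_subset i q hm)
    simpa [Finsupp.single_eq_of_ne hji] using le_degreeOf_of_mem_support j hn

theorem degreeOf_antideriv_self_le (i : σ) (q : MvPolynomial σ R) :
    degreeOf i (antideriv i q) ≤ degreeOf i q + 1 :=
  degreeOf_le_iff.mpr fun m hm => by
    obtain ⟨n, hn, rfl⟩ := Finset.mem_map.mp (support_antideriv_subset i q hm)
    simpa using le_degreeOf_of_mem_support i hn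

end antideriv

end MvPolynomial

/-- `∇·RT_k = Q_k`: the divergence of every element of the Raviart–Thomas set `RT_k`
(in which the `i`-th component has degree at most `k + 1` in `x_i` and at most `k` in
every other variable) has degree at most `k` in each variable, and conversely every
polynomial of degree at most `k` in each variable is the divergence of an element of
`RT_k`. -/
theorem divergence_RTk_eq_Qk {d k : ℕ} (hd : 1 ≤ d) :
    (∀ v : Fin d → MvPolynomial (Fin d) ℝ,
      (∀ i, degreeOf i (v i) ≤ k + 1 ∧ ∀ j, j ≠ i → degreeOf j (v i) ≤ k) →
      ∀ j, degreeOf j (∑ i, pderiv i (v i)) ≤ k) ∧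
    (∀ q : MvPolynomial (Fin d) ℝ, (∀ j, degreeOf j q ≤ k) →
      ∃ v : Fin d → MvPolynomial (Fin d) ℝ,
        (∀ i, degreeOf i (v i) ≤ k + 1 ∧ ∀ j, j ≠ i → degreeOf j (v i) ≤ k) ∧
        ∑ i, pderiv i (v i) = q) := by
  refine ⟨fun v hv j => ?_, fun q hq => ?_⟩
  · refine (degreeOf_sum_le j _ _).trans (Finset.sup_le fun i _ => ?_)
    obtain rfl | hji := eq_or_ne j i
    · exact (degreeOf_pderiv_self_le j _).trans (Nat.sub_le_of_le_add (hv j).1)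
    · exact (degreeOf_pderiv_le_of_ne hji _).trans ((hv i).2 j hji)
  · have i₀ : Fin d := ⟨0, hd⟩
    refine ⟨Pi.single i₀ (antideriv i₀ q), fun i => ?_, ?_⟩
    · obtain rfl | hi := eq_or_ne i i₀
      · rw [Pi.single_eq_same]
        exact ⟨(degreeOf_antideriv_self_le i q).trans (Nat.add_le_add_right (hq i) 1),
          fun j hj => (degreeOf_antideriv_le_of_ne hj q).trans (hq j)⟩
      · simp [Pi.single_eq_of_ne hi]
    · rw [Finset.sum_eq_single i₀ (fun i _ hi => by rw [Pi.single_eq_of_ne hi, map_zero])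
        (fun h => absurd (Finset.mem_univ i₀) h), Pi.single_eq_same, pderiv_antideriv]
end

section
/- Define v : ℝ² → ℝ² by v(x_1, x_2) := (x_1 − 2 x_1 x_2, 0). Each component of v is a polynomial of degree at most 1 in each variable. Then ∫_{(0,1)²} (div v)(x) q dx = 0 for every constant q ∈ ℝ, yet div v (which equals 1 − 2x_2) is not identically zero on (0,1)². Hence v is discretely divergence-free against piecewise-constant pressures on the unit square but is not divergence-free. -/
/-!
The divergence of `v` is `1 - 2 x₂`: it depends on `x₂` alone and has mean zero on `(0, 1)`,
so by Fubini it is orthogonal to the constants on the unit square, yet it vanishes only on the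
line `x₂ = 1/2`.
-/

open MeasureTheory Set

theorem pdiv_eq_sum_deriv {d : ℕ} {w : (Fin d → ℝ) → (Fin d → ℝ)} {x : Fin d → ℝ}
    (hw : DifferentiableAt ℝ w x) :
    pdiv w x = ∑ i, deriv (fun t => w (Function.update x i t) i) (x i) := by
  refine Finset.sum_congr rfl fun i _ => ?_
  have hline : HasDerivAt (fun t => w (Function.update x i t)) (fderiv ℝ w x (Pi.single i 1))
      (x i) :=
    hw.hasFDerivAt.comp_hasDerivAt_of_eq (x i) (hasDerivAt_update x i (x i))
      (Function.update_eq_self i x).symm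
  exact ((hasDerivAt_pi.1 hline) i).deriv.symm

theorem setIntegral_pi_comp_eval {ι E : Type*} [Fintype ι] [NormedAddCommGroup E]
    [NormedSpace ℝ E] {s : ι → Set ℝ} (hs : ∀ j, volume (s j) = 1) (i : ι) {f : ℝ → E}
    (hf : AEStronglyMeasurable f (volume.restrict (s i))) :
    ∫ x in pi univ s, f (x i) = ∫ t in s i, f t := by
  have : ∀ j, IsProbabilityMeasure (volume.restrict (s j)) := fun j => ⟨by simp [hs j]⟩
  rw [volume_pi, Measure.restrict_pi_pi]
  exact integral_comp_eval hf

theorem intervalIntegral_one_sub_two_mul : ∫ t in (0 : ℝ)..1, (1 - 2 * t) = 0 := by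
  rw [intervalIntegral.integral_eq_sub_of_hasDerivAt (f := fun t => t - t ^ 2) (fun t _ => ?_)
    ((by fun_prop : Continuous fun t : ℝ => 1 - 2 * t).intervalIntegrable 0 1)]
  · norm_num
  · simpa using (hasDerivAt_id' t).fun_sub (hasDerivAt_pow 2 t)

noncomputable def counterexampleField (x : Fin 2 → ℝ) : Fin 2 → ℝ :=
  ![x 0 - 2 * x 0 * x 1, 0]

theorem differentiable_counterexampleField : Differentiable ℝ counterexampleField := by
  refine differentiable_pi.2 (Fin.forall_fin_two.2 ⟨?_, ?_⟩) <;>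
    simp only [counterexampleField, Matrix.cons_val_zero, Matrix.cons_val_one] <;> fun_prop

theorem pdiv_counterexampleField (x : Fin 2 → ℝ) :
    pdiv counterexampleField x = 1 - 2 * x 1 := by
  have hline : HasDerivAt (fun t => t - 2 * t * x 1) (1 - 2 * x 1) (x 0) := by
    simpa using
      (hasDerivAt_id' (x 0)).fun_sub (((hasDerivAt_id' (x 0)).const_mul 2).mul_const (x 1))
  rw [pdiv_eq_sum_deriv (differentiable_counterexampleField x)]
  simp [Fin.sum_univ_two, counterexampleField, hline.deriv]

/-- The field `v(x₁, x₂) = (x₁ - 2x₁x₂, 0)` is discretely divergence-free against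
constant pressures on the unit square `(0,1)²` (its divergence `1 - 2x₂` integrates
to zero against every constant), but it is not divergence-free. -/
theorem discretely_div_free_not_div_free
    (v : (Fin 2 → ℝ) → (Fin 2 → ℝ))
    (hv : ∀ x, v x = ![x 0 - 2 * x 0 * x 1, 0]) :
    (∀ q : ℝ,
      ∫ x in Set.pi Set.univ (fun _ : Fin 2 => Set.Ioo (0 : ℝ) 1), pdiv v x * q = 0) ∧
    (∀ x, pdiv v x = 1 - 2 * x 1) ∧
    ¬ (∀ x ∈ Set.pi Set.univ (fun _ : Fin 2 => Set.Ioo (0 : ℝ) 1), pdiv v x = 0) := by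
  obtain rfl : v = counterexampleField := funext hv
  refine ⟨fun q => ?_, pdiv_counterexampleField, fun h => ?_⟩
  · simp_rw [pdiv_counterexampleField]
    rw [integral_mul_const, setIntegral_pi_comp_eval (fun _ => by simp) 1
      (f := fun t => 1 - 2 * t) (by fun_prop), ← integral_Ioc_eq_integral_Ioo,
      ← intervalIntegral.integral_of_le zero_le_one, intervalIntegral_one_sub_two_mul, zero_mul]
  · have hquarter : (fun _ => 1 / 4 : Fin 2 → ℝ) ∈ pi univ fun _ => Ioo (0 : ℝ) 1 :=
      fun _ _ => by norm_num
    have := h _ hquarter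
    norm_num [pdiv_counterexampleField] at this
end
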